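/- Let A < B, let k = 2m be even and let Ψ₀,…,Ψ_{2m−1} : [A,B] → ℝ be a Chebyshev system. If σ₁ and σ₂ are finitely supported nonnegative measures on [A,B], each supported on exactly m+1 points including both endpoints A and B, and ∫_A^B Ψ_i dσ₁ = ∫_A^B Ψ_i dσ₂ for all i = 0,…,2m−1, then σ₁ = σ₂. (Uniqueness of the upper principal representation for even k.) -/

import Mathlib

/-!
Both supports contain `A` and `B`, so their union has at most `2m` points. Equal moments say
that the differences of the weights on this union, padded by zeros to `2m` points of `[A, B]`,
form a kernel vector of the collocation matrix `(Ψ i (x j))`, whose determinant is positive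
by the Chebyshev property. Hence all weight differences vanish.
-/

open MeasureTheory Set

/-- A family of functions `Ψ₀, …, Ψ_{k-1}` is a Chebyshev system on `[A,B]` if for all
points `A ≤ x₀ < x₁ < ⋯ < x_{k-1} ≤ B` the matrix `(Ψ i (x j))` has positive determinant. -/
def IsChebyshevSystem (A B : ℝ) {k : ℕ} (Ψ : Fin k → ℝ → ℝ) : Prop :=
  ∀ x : Fin k → ℝ, StrictMono x → (∀ j, x j ∈ Set.Icc A B) →
    0 < (Matrix.of fun i j : Fin k => Ψ i (x j)).det

/-- `σ` is a finitely supported nonnegative measure on `[A,B]`, supported exactly on the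
finite set `s ⊆ [A,B]`, i.e. `σ = ∑_{x ∈ s} a_x δ_x` with positive finite weights. -/
def IsAtomicMeasureOn (A B : ℝ) (σ : Measure ℝ) (s : Finset ℝ) : Prop :=
  ↑s ⊆ Set.Icc A B ∧ (∀ x ∈ s, 0 < σ {x} ∧ σ {x} < ⊤) ∧
    σ = ∑ x ∈ s, σ {x} • Measure.dirac x

open Finset in
theorem Set.Infinite.exists_finset_superset_card_eq {α : Type*} {t : Set α} (ht : t.Infinite)
    {u : Finset α} (hu : ↑u ⊆ t) {k : ℕ} (hk : #u ≤ k) :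
    ∃ v : Finset α, u ⊆ v ∧ ↑v ⊆ t ∧ #v = k := by
  classical
  obtain ⟨w, hwt, hwcard⟩ := (ht.sdiff u.finite_toSet).exists_subset_card_eq (k - #u)
  have hdisj : Disjoint u w := Finset.disjoint_right.2 fun x hx hxu => (hwt hx).2 hxu
  refine ⟨u ∪ w, Finset.subset_union_left, ?_, ?_⟩
  · rw [coe_union]
    exact Set.union_subset hu fun x hx => (hwt hx).1
  · rw [card_union_of_disjoint hdisj, hwcard]
    omega

namespace IsChebyshevSystem

variable {A B : ℝ} {k : ℕ} {Ψ : Fin k → ℝ → ℝ}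

theorem eq_zero_of_sum_mul_eq_zero_of_card_eq (hΨ : IsChebyshevSystem A B Ψ) {u : Finset ℝ}
    (hu : ↑u ⊆ Icc A B) (hcard : u.card = k) {c : ℝ → ℝ}
    (hc : ∀ i, ∑ x ∈ u, c x * Ψ i x = 0) : ∀ x ∈ u, c x = 0 := by
  set e := u.orderIsoOfFin hcard
  have hdet := (hΨ (fun j => e j) (fun i j hij => e.strictMono hij) fun j => hu (e j).2).ne'
  have hmulVec : (Matrix.of fun i j => Ψ i (e j)).mulVec (fun j => c (e j)) = 0 := by
    funext i
    rw [Pi.zero_apply, ← hc i, ← Finset.sum_coe_sort u, ← e.toEquiv.sum_comp]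
    simp [Matrix.mulVec, dotProduct, mul_comm]
  intro x hx
  simpa using congrFun (Matrix.eq_zero_of_mulVec_eq_zero hdet hmulVec) (e.symm ⟨x, hx⟩)

theorem eq_zero_of_sum_mul_eq_zero (hΨ : IsChebyshevSystem A B Ψ) (hAB : A < B)
    {u : Finset ℝ} (hu : ↑u ⊆ Icc A B) (hcard : u.card ≤ k) {c : ℝ → ℝ}
    (hc : ∀ i, ∑ x ∈ u, c x * Ψ i x = 0) : ∀ x ∈ u, c x = 0 := by
  obtain ⟨v, huv, hv, hvcard⟩ := (Icc_infinite hAB).exists_finset_superset_card_eq hu hcard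
  have hc' : ∀ i, ∑ x ∈ v, (if x ∈ u then c x else 0) * Ψ i x = 0 := fun i => by
    simpa [ite_mul, Finset.sum_ite_mem, Finset.inter_eq_right.2 huv] using hc i
  intro x hx
  simpa [hx] using hΨ.eq_zero_of_sum_mul_eq_zero_of_card_eq hv hvcard hc' x (huv hx)

end IsChebyshevSystem

namespace IsAtomicMeasureOn

variable {A B : ℝ} {σ : Measure ℝ} {s t : Finset ℝ}

theorem measure_singleton_eq_zero (hσ : IsAtomicMeasureOn A B σ s) {y : ℝ} (hy : y ∉ s) :
    σ {y} = 0 := by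
  rw [hσ.2.2, Measure.finsetSum_apply]
  refine Finset.sum_eq_zero fun x hx => ?_
  simp [ne_of_mem_of_not_mem hx hy]

theorem measure_singleton_ne_top (hσ : IsAtomicMeasureOn A B σ s) (y : ℝ) : σ {y} ≠ ⊤ := by
  by_cases hy : y ∈ s
  · exact (hσ.2.1 y hy).2.ne
  · simp [hσ.measure_singleton_eq_zero hy]

theorem eq_sum_dirac_of_subset (hσ : IsAtomicMeasureOn A B σ s) (hst : s ⊆ t) :
    σ = ∑ x ∈ t, σ {x} • Measure.dirac x := by
  refine hσ.2.2.trans (Finset.sum_subset hst fun x _ hx => ?_)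
  rw [hσ.measure_singleton_eq_zero hx, zero_smul]

theorem integral_eq_sum_of_subset (hσ : IsAtomicMeasureOn A B σ s) (hst : s ⊆ t) (f : ℝ → ℝ) :
    ∫ x, f x ∂σ = ∑ x ∈ t, σ.real {x} * f x := by
  conv_lhs => rw [hσ.eq_sum_dirac_of_subset hst]
  rw [integral_finsetSum_measure fun x _ =>
    (integrable_dirac enorm_lt_top).smul_measure (hσ.measure_singleton_ne_top x)]
  simp [integral_smul_measure, measureReal_def]

theorem eq_of_measureReal_singleton_eq {σ' : Measure ℝ} {s' : Finset ℝ}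
    (hσ : IsAtomicMeasureOn A B σ s) (hσ' : IsAtomicMeasureOn A B σ' s')
    (h : ∀ x ∈ s ∪ s', σ.real {x} = σ'.real {x}) : σ = σ' := by
  rw [hσ.eq_sum_dirac_of_subset Finset.subset_union_left,
    hσ'.eq_sum_dirac_of_subset Finset.subset_union_right]
  refine Finset.sum_congr rfl fun x hx => ?_
  rw [(ENNReal.toReal_eq_toReal_iff' (hσ.measure_singleton_ne_top x)
    (hσ'.measure_singleton_ne_top x)).1 (h x hx)]

end IsAtomicMeasureOn

theorem upper_principal_representation_unique_even_general
    {m : ℕ} (A B : ℝ) (hAB : A < B) (Ψ : Fin (2 * m) → ℝ → ℝ)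
    (hCheb : IsChebyshevSystem A B Ψ)
    (σ₁ σ₂ : Measure ℝ) (s₁ s₂ : Finset ℝ)
    (h₁ : IsAtomicMeasureOn A B σ₁ s₁) (h₂ : IsAtomicMeasureOn A B σ₂ s₂)
    (hcard₁ : s₁.card = m + 1) (hcard₂ : s₂.card = m + 1)
    (hA₁ : A ∈ s₁) (hB₁ : B ∈ s₁) (hA₂ : A ∈ s₂) (hB₂ : B ∈ s₂)
    (hmom : ∀ i, ∫ x, Ψ i x ∂σ₁ = ∫ x, Ψ i x ∂σ₂) :
    σ₁ = σ₂ := by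
  have hcard : (s₁ ∪ s₂).card ≤ 2 * m := by
    have hpair : ({A, B} : Finset ℝ) ⊆ s₁ ∩ s₂ := by
      simp [Finset.insert_subset_iff, hA₁, hB₁, hA₂, hB₂]
    have hinter := Finset.card_le_card hpair
    rw [Finset.card_pair hAB.ne] at hinter
    have := Finset.card_union_add_card_inter s₁ s₂
    omega
  have hsub : ↑(s₁ ∪ s₂) ⊆ Icc A B := by
    rw [Finset.coe_union]
    exact union_subset h₁.1 h₂.1
  have hweights : ∀ x ∈ s₁ ∪ s₂, σ₁.real {x} - σ₂.real {x} = 0 :=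
    hCheb.eq_zero_of_sum_mul_eq_zero hAB hsub hcard fun i => by
      rw [Finset.sum_congr rfl fun x _ => sub_mul _ _ _, Finset.sum_sub_distrib,
        ← h₁.integral_eq_sum_of_subset Finset.subset_union_left,
        ← h₂.integral_eq_sum_of_subset Finset.subset_union_right, hmom, sub_self]
  exact h₁.eq_of_measureReal_singleton_eq h₂ fun x hx => sub_eq_zero.1 (hweights x hx)

/-- Uniqueness of the upper principal representation for even `k = 2m`: two finitely
supported nonnegative measures on `[A,B]`, each supported on exactly `m+1` points
including both endpoints, with equal moments w.r.t. a Chebyshev system `Ψ₀,…,Ψ_{2m-1}`,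
coincide. -/
theorem upper_principal_representation_unique_even
    {m : ℕ} (A B : ℝ) (hAB : A < B) (Ψ : Fin (2 * m) → ℝ → ℝ)
    (hcont : ∀ i, ContinuousOn (Ψ i) (Set.Icc A B))
    (hCheb : IsChebyshevSystem A B Ψ)
    (σ₁ σ₂ : Measure ℝ) (s₁ s₂ : Finset ℝ)
    (h₁ : IsAtomicMeasureOn A B σ₁ s₁) (h₂ : IsAtomicMeasureOn A B σ₂ s₂)
    (hcard₁ : s₁.card = m + 1) (hcard₂ : s₂.card = m + 1)
    (hA₁ : A ∈ s₁) (hB₁ : B ∈ s₁) (hA₂ : A ∈ s₂) (hB₂ : B ∈ s₂)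
    (hmom : ∀ i, ∫ x, Ψ i x ∂σ₁ = ∫ x, Ψ i x ∂σ₂) :
    σ₁ = σ₂ :=
  upper_principal_representation_unique_even_general A B hAB Ψ hCheb σ₁ σ₂ s₁ s₂ h₁ h₂ hcard₁ hcard₂
    hA₁ hB₁ hA₂ hB₂ hmom
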